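/- arXiv:1005.1425 — 5 statements merged into one kernel-verified Lean document; each statement's English description precedes it below -/
import Mathlib

section
/- For any real b with 0 ≤ b < 1 and any positive integer k, ((1+b)^k - (1-b)^k)/((1+b)^k + (1-b)^k) ≥ 1 - e^{-kb}. -/
/-!
With `A = (1 + b)^k` and `B = (1 - b)^k` the right-hand side is `1 - 2B/(A + B)`.
Bernoulli's inequality applied to `±b` gives `A + B ≥ 2`, and `1 - b ≤ e^{-b}` gives
`B ≤ e^{-kb}`, so `2B/(A + B) ≤ B ≤ e^{-kb}`.
-/

lemma two_le_one_add_pow_add_one_sub_pow {R : Type*} [CommRing R] [LinearOrder R]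
    [IsStrictOrderedRing R] {b : R} (hb : |b| ≤ 2) (k : ℕ) :
    2 ≤ (1 + b) ^ k + (1 - b) ^ k := by
  have hplus := one_add_mul_le_pow (neg_le_of_abs_le hb) k
  have hminus := one_add_mul_le_pow (neg_le_neg (le_of_abs_le hb)) k
  rw [← sub_eq_add_neg, mul_neg] at hminus
  linarith

lemma Real.one_sub_pow_le_exp_neg_mul {b : ℝ} (hb : b ≤ 1) (k : ℕ) :
    (1 - b) ^ k ≤ Real.exp (-(k * b)) := by
  calc (1 - b) ^ k ≤ Real.exp (-b) ^ k :=
        pow_le_pow_left₀ (by linarith) (Real.one_sub_le_exp_neg b) k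
    _ = Real.exp (-(k * b)) := by rw [← Real.exp_nat_mul, mul_neg]

theorem stmt6_general (b : ℝ) (hb0 : 0 ≤ b) (hb1 : b < 1) (k : ℕ) :
    1 - Real.exp (-(k * b)) ≤
      ((1 + b) ^ k - (1 - b) ^ k) / ((1 + b) ^ k + (1 - b) ^ k) := by
  have hsum : 2 ≤ (1 + b) ^ k + (1 - b) ^ k :=
    two_le_one_add_pow_add_one_sub_pow (by rw [abs_of_nonneg hb0]; linarith) k
  have hminus : 0 ≤ (1 - b) ^ k := pow_nonneg (by linarith) k
  calc 1 - Real.exp (-(k * b)) ≤ 1 - (1 - b) ^ k := by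
        linarith [Real.one_sub_pow_le_exp_neg_mul hb1.le k]
    _ ≤ 1 - 2 * (1 - b) ^ k / ((1 + b) ^ k + (1 - b) ^ k) := by
        gcongr
        rw [div_le_iff₀ (by linarith)]
        nlinarith
    _ = ((1 + b) ^ k - (1 - b) ^ k) / ((1 + b) ^ k + (1 - b) ^ k) := by
        field_simp
        ring

/-- Post-selective bias amplification bound. -/
theorem stmt6 (b : ℝ) (hb0 : 0 ≤ b) (hb1 : b < 1) (k : ℕ) (hk : 0 < k) :
    1 - Real.exp (-(k * b)) ≤
      ((1 + b) ^ k - (1 - b) ^ k) / ((1 + b) ^ k + (1 - b) ^ k) :=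
  stmt6_general b hb0 hb1 k
end

section
/- For all real b with 0 ≤ b < 1 and every positive integer k, 2·e^{kb} ≤ 1 + ((1+b)/(1-b))^k. -/
/-! The series `log (1 + b) - log (1 - b) = 2 (b + b³/3 + b⁵/5 + ⋯)` has nonnegative terms for
`b ≥ 0`, so `e^{2b} ≤ (1 + b)/(1 - b)` and hence `e^{2kb} ≤ ((1 + b)/(1 - b))^k`. Together with
`2y ≤ 1 + y²` for `y = e^{kb}` this gives the claim. -/

open Real

lemma two_mul_le_log_one_add_sub_log_one_sub {x : ℝ} (hx0 : 0 ≤ x) (hx1 : x < 1) :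
    2 * x ≤ log (1 + x) - log (1 - x) := by
  have hsum := hasSum_log_sub_log_of_abs_lt_one (abs_lt.mpr ⟨by linarith, hx1⟩)
  simpa using le_hasSum hsum 0 fun k _ => by positivity

lemma exp_two_mul_le_one_add_div_one_sub {x : ℝ} (hx0 : 0 ≤ x) (hx1 : x < 1) :
    exp (2 * x) ≤ (1 + x) / (1 - x) := by
  rw [← exp_log (div_pos (by linarith) (by linarith : 0 < 1 - x)),
    log_div (by linarith) (by linarith), exp_le_exp]
  exact two_mul_le_log_one_add_sub_log_one_sub hx0 hx1

theorem stmt8_general (b : ℝ) (hb0 : 0 ≤ b) (hb1 : b < 1) (k : ℕ) :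
    2 * Real.exp (k * b) ≤ 1 + ((1 + b) / (1 - b)) ^ k := by
  have hsq : Real.exp (k * b) ^ 2 = Real.exp (2 * b) ^ k := by
    rw [← exp_nat_mul, ← exp_nat_mul]
    ring_nf
  calc 2 * Real.exp (k * b) ≤ 1 + Real.exp (k * b) ^ 2 := by
        nlinarith [sq_nonneg (Real.exp (k * b) - 1)]
    _ = 1 + Real.exp (2 * b) ^ k := by rw [hsq]
    _ ≤ 1 + ((1 + b) / (1 - b)) ^ k := by
        gcongr
        exact exp_two_mul_le_one_add_div_one_sub hb0 hb1

/-- For 0 ≤ b < 1 and k ≥ 1, 2·e^{kb} ≤ 1 + ((1+b)/(1-b))^k. -/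
theorem stmt8 (b : ℝ) (hb0 : 0 ≤ b) (hb1 : b < 1) (k : ℕ) (hk : 1 ≤ k) :
    2 * Real.exp (k * b) ≤ 1 + ((1 + b) / (1 - b)) ^ k :=
  stmt8_general b hb0 hb1 k
end

section
/- Let q be a positive integer and c = (c₁,...,c_m) a tuple of integers. Let κ be uniform on {0,...,q-1} and s uniform on {0,1}^m with complement s̄. Then E_κ[∏_{j=1}^m cos(2π·c_j·κ/q)] = P_s(∑_{j: s_j=1} c_j ≡ ∑_{j: s_j=0} c_j (mod q)). -/
open scoped Classical

/-!
Writing `cos x = (e^{ix} + e^{-ix}) / 2` and expanding the product turns `∏ j, cos (c j * x)` into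
the average over sign vectors `s` of `cos ((∑ j, ±c j) * x)`. Averaging `cos (2πnκ/q)` over
`κ < q` gives the indicator of `q ∣ n` (a geometric sum of `q`-th roots of unity), and the
congruence between the two complementary subset sums says exactly that `q` divides the signed sum.
-/

open Finset Real

theorem IsPrimitiveRoot.sum_range_zpow_pow {K : Type*} [Field K] {ζ : K} {q : ℕ}
    (hζ : IsPrimitiveRoot ζ q) (n : ℤ) :
    ∑ κ ∈ range q, (ζ ^ n) ^ κ = if (q : ℤ) ∣ n then (q : K) else 0 := by
  split_ifs with h
  · simp [(hζ.zpow_eq_one_iff_dvd n).2 h]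
  · rw [geom_sum_eq ((hζ.zpow_eq_one_iff_dvd n).not.2 h), ← zpow_natCast, ← zpow_mul,
      mul_comm, zpow_mul, hζ.zpow_eq_one, one_zpow, sub_self, zero_div]

theorem Real.sum_range_cos_int_mul_two_pi_div {q : ℕ} (hq : q ≠ 0) (n : ℤ) :
    ∑ κ ∈ range q, cos (n * (2 * π * κ / q)) = if (q : ℤ) ∣ n then (q : ℝ) else 0 := by
  have hexp : ∀ κ : ℕ, (Complex.exp (2 * π * Complex.I / q) ^ n) ^ κ
      = Complex.exp ((n * (2 * π * κ / q) : ℝ) * Complex.I) := by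
    intro κ
    rw [← Complex.exp_int_mul, ← Complex.exp_nat_mul]
    push_cast
    ring_nf
  have := congrArg Complex.re ((Complex.isPrimitiveRoot_exp q hq).sum_range_zpow_pow n)
  simp only [hexp, Complex.re_sum, Complex.exp_ofReal_mul_I_re] at this
  rw [this]
  split_ifs <;> simp

theorem Fintype.prod_add_eq_sum_bool {ι R : Type*} [Fintype ι] [DecidableEq ι] [CommSemiring R]
    (f g : ι → R) :
    ∏ i, (f i + g i) = ∑ s : ι → Bool, ∏ i, if s i then f i else g i := by
  have hfg : ∀ i, f i + g i = ∑ b : Bool, if b then f i else g i := fun i => by simp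
  rw [Fintype.prod_congr _ _ hfg, Finset.prod_univ_sum, Fintype.piFinset_univ]

theorem Real.prod_cos_eq_sum_cos {ι : Type*} [Fintype ι] (θ : ι → ℝ) :
    ∏ j, cos (θ j)
      = (1 / 2 ^ Fintype.card ι) * ∑ s : ι → Bool, cos (∑ j, if s j then θ j else -θ j) := by
  have hC : ((∏ j, cos (θ j) : ℝ) : ℂ) = ((1 / 2 ^ Fintype.card ι : ℝ) : ℂ) *
      ∑ s : ι → Bool, Complex.exp ((∑ j, if s j then θ j else -θ j : ℝ) * Complex.I) := by
    simp only [Complex.ofReal_prod, Complex.ofReal_cos, Complex.cos, Finset.prod_div_distrib,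
      Fintype.prod_add_eq_sum_bool]
    rw [prod_const, card_univ, div_eq_inv_mul, Complex.ofReal_div, Complex.ofReal_one,
      Complex.ofReal_pow, Complex.ofReal_ofNat, one_div]
    congr 1
    refine sum_congr rfl fun s _ => ?_
    rw [Complex.ofReal_sum, sum_mul, Complex.exp_sum]
    refine prod_congr rfl fun j _ => ?_
    split_ifs <;> push_cast <;> ring_nf
  have := congrArg Complex.re hC
  rw [Complex.ofReal_re, Complex.re_ofReal_mul, Complex.re_sum] at this
  simpa only [Complex.exp_ofReal_mul_I_re] using this

theorem Int.modEq_sum_ite_iff_dvd {ι : Type*} (t : Finset ι) (p : ι → Prop) [DecidablePred p]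
    (n : ℤ) (c : ι → ℤ) :
    (∑ j ∈ t, if p j then c j else 0) ≡ (∑ j ∈ t, if p j then 0 else c j) [ZMOD n]
      ↔ n ∣ ∑ j ∈ t, if p j then c j else -c j := by
  rw [Int.modEq_iff_dvd, ← dvd_neg, neg_sub, ← sum_sub_distrib]
  congr! 2 with j
  split_ifs <;> simp

/-- The expected product of cosines over κ equals the probability that a random
subset of the weights has sum congruent (mod q) to its complement's sum. -/
theorem stmt15 (m q : ℕ) (hq : 0 < q) (c : Fin m → ℤ) :
    (1 / q : ℝ) * ∑ κ ∈ Finset.range q, ∏ j,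
        Real.cos (2 * Real.pi * (c j : ℝ) * κ / q)
      = (1 / 2 ^ m) * ∑ s : Fin m → Bool,
          (if Int.ModEq (q : ℤ) (∑ j, if s j then c j else 0)
              (∑ j, if s j then 0 else c j) then (1:ℝ) else 0) := by
  set D : (Fin m → Bool) → ℤ := fun s => ∑ j, if s j then c j else -c j
  have hprod : ∀ κ : ℕ, ∏ j, cos (2 * π * c j * κ / q)
      = (1 / 2 ^ m) * ∑ s, cos (D s * (2 * π * κ / q)) := by
    intro κ
    rw [Real.prod_cos_eq_sum_cos, Fintype.card_fin]
    congr! 3 with s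
    push_cast [D, apply_ite (Int.cast : ℤ → ℝ), sum_mul]
    congr! 1 with j
    split_ifs <;> ring
  calc (1 / q : ℝ) * ∑ κ ∈ range q, ∏ j, cos (2 * π * c j * κ / q)
      = (1 / 2 ^ m) * ∑ s, (1 / q) * ∑ κ ∈ range q, cos (D s * (2 * π * κ / q)) := by
        simp only [hprod, ← mul_sum, sum_comm (s := range q)]
        ring
    _ = _ := by
        congr! 2 with s
        simp only [Real.sum_range_cos_int_mul_two_pi_div hq.ne', Int.modEq_sum_ite_iff_dvd, D]
        split_ifs <;> simp [hq.ne']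
end

section
/- For every y ∈ {0,1}^m, every positive integer q, and every integer tuple c = (c₁,...,c_m): (2^m/q)·∑_{κ=0}^{q-1} ∏_{j=1}^m (1 + (-1)^{y_j}·cos(2π·c_j·κ/q)) = ∑_{s,s' ∈ {0,1}^m} (-1)^{y·(s+s')}·[s·c ≡ s'·c (mod q)], where [·] is the indicator function. -/
/-!
With `ε = ±1` and `ζ = exp (2πiκ/q)`, each factor `2 + 2ε cos (2π c κ / q)` splits as
`(1 + ε ζ^c) (1 + ε ζ^(-c))`. Expanding both products over subsets turns
`2^m ∏ⱼ (1 + εⱼ cos …)` into `∑_{s,s'} ε^(s+s') ζ^(s·c - s'·c)`, and averaging over `κ`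
keeps exactly the pairs with `s·c ≡ s'·c (mod q)`, since `∑_{κ<q} ω^(κt) = q [q ∣ t]` for a
primitive `q`-th root of unity `ω`.
-/

open Finset Complex

theorem Finset.prod_zpow_eq_zpow_sum₀ {ι K : Type*} [CommGroupWithZero K] (s : Finset ι)
    (f : ι → ℤ) {a : K} (ha : a ≠ 0) : ∏ i ∈ s, a ^ f i = a ^ ∑ i ∈ s, f i := by
  induction s using Finset.cons_induction with
  | empty => simp
  | cons i s hi ih => rw [prod_cons, sum_cons, ih, zpow_add₀ ha]

theorem prod_one_add_eq_sum_bool {ι R : Type*} [Fintype ι] [DecidableEq ι] [CommSemiring R]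
    (f : ι → R) : ∏ i, (1 + f i) = ∑ s : ι → Bool, ∏ i, if s i then f i else 1 := by
  rw [← Fintype.prod_sum fun i (b : Bool) => if b then f i else 1]
  simp [add_comm]

section Field

variable {ι K : Type*} [Fintype ι] [DecidableEq ι] [Field K]

theorem two_add_mul_add_inv {ε z : K} (hε : ε ^ 2 = 1) (hz : z ≠ 0) :
    2 + ε * (z + z⁻¹) = (1 + ε * z) * (1 + ε * z⁻¹) := by
  linear_combination -hε - ε ^ 2 * mul_inv_cancel₀ hz

theorem prod_one_add_pow_mul_zpow (a : K) (e : ι → ℕ) (c : ι → ℤ) {ζ : K} (hζ : ζ ≠ 0) :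
    ∏ i, (1 + a ^ e i * ζ ^ c i)
      = ∑ s : ι → Bool, a ^ (∑ i, e i * if s i then 1 else 0)
          * ζ ^ (∑ i, if s i then c i else 0) := by
  rw [prod_one_add_eq_sum_bool]
  refine sum_congr rfl fun s _ => ?_
  rw [← prod_pow_eq_pow_sum, ← prod_zpow_eq_zpow_sum₀ _ _ hζ, ← prod_mul_distrib]
  refine prod_congr rfl fun i _ => ?_
  cases s i <;> simp

theorem prod_two_add_neg_one_pow_mul_zpow_add_inv (e : ι → ℕ) (c : ι → ℤ) {ζ : K}
    (hζ : ζ ≠ 0) :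
    ∏ i, (2 + (-1) ^ e i * (ζ ^ c i + (ζ ^ c i)⁻¹))
      = ∑ s : ι → Bool, ∑ s' : ι → Bool,
          (-1) ^ (∑ i, e i * ((if s i then 1 else 0) + if s' i then 1 else 0))
            * ζ ^ ((∑ i, if s i then c i else 0) - ∑ i, if s' i then c i else 0) := by
  have hsq : ∀ i, ((-1 : K) ^ e i) ^ 2 = 1 := fun i => by
    rw [← pow_mul, mul_comm, pow_mul]; simp
  simp_rw [fun i => two_add_mul_add_inv (hsq i) (zpow_ne_zero (c i) hζ), prod_mul_distrib,
    ← inv_zpow, prod_one_add_pow_mul_zpow _ _ _ hζ,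
    prod_one_add_pow_mul_zpow _ _ _ (inv_ne_zero hζ), sum_mul_sum]
  refine sum_congr rfl fun s _ => sum_congr rfl fun s' _ => ?_
  rw [inv_zpow', zpow_sub₀ hζ, div_eq_mul_inv, ← zpow_neg]
  simp_rw [mul_add, sum_add_distrib, pow_add]
  ring

theorem IsPrimitiveRoot.sum_range_pow_zpow {ω : K} {q : ℕ} (hω : IsPrimitiveRoot ω q) (t : ℤ) :
    ∑ κ ∈ range q, (ω ^ κ) ^ t = if (q : ℤ) ∣ t then (q : K) else 0 := by
  have hcomm : ∀ κ : ℕ, (ω ^ κ) ^ t = (ω ^ t) ^ κ := fun κ => by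
    rw [← zpow_natCast, ← zpow_natCast, ← zpow_mul, ← zpow_mul, mul_comm]
  simp_rw [hcomm]
  split_ifs with h
  · simp [(hω.zpow_eq_one_iff_dvd t).2 h]
  · have hq : (ω ^ t) ^ q = 1 := by
      rw [← zpow_natCast, ← zpow_mul, mul_comm, zpow_mul, hω.zpow_eq_one, one_zpow]
    rw [geom_sum_eq (mt (hω.zpow_eq_one_iff_dvd t).1 h), hq, sub_self, zero_div]

end Field

theorem Complex.two_mul_cos_int_mul (k : ℤ) (x : ℂ) :
    2 * cos (k * x) = exp (x * I) ^ k + (exp (x * I) ^ k)⁻¹ := by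
  rw [two_cos, ← exp_int_mul, ← exp_neg]
  ring_nf

theorem Complex.two_pow_card_mul_prod_one_add_mul_cos {ι : Type*} [Fintype ι] (e : ι → ℕ)
    (c : ι → ℤ) (x : ℂ) :
    2 ^ Fintype.card ι * ∏ i, (1 + (-1) ^ e i * cos (c i * x))
      = ∏ i, (2 + (-1) ^ e i * (exp (x * I) ^ c i + (exp (x * I) ^ c i)⁻¹)) := by
  rw [← card_univ, ← prod_const, ← prod_mul_distrib]
  refine prod_congr rfl fun i _ => ?_
  rw [← two_mul_cos_int_mul]
  ring

/-- Identity relating the cosine sums over κ to signed indicator sums over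
pairs of subsets (Lemma on modular subset sums). -/
theorem stmt16 (m q : ℕ) (hq : 0 < q) (c : Fin m → ℤ) (y : Fin m → Bool) :
    ((2:ℝ) ^ m / q) * ∑ κ ∈ Finset.range q, ∏ j,
        (1 + (-1:ℝ) ^ (if y j then 1 else 0)
          * Real.cos (2 * Real.pi * (c j : ℝ) * κ / q))
      = ∑ s : Fin m → Bool, ∑ s' : Fin m → Bool,
          (-1:ℝ) ^ (∑ j, (if y j then 1 else 0) *
              ((if s j then 1 else 0) + (if s' j then (1:ℕ) else 0)))
            * (if Int.ModEq (q : ℤ) (∑ j, if s j then c j else 0)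
                (∑ j, if s' j then c j else 0) then (1:ℝ) else 0) := by
  set ω : ℂ := exp (2 * Real.pi * I / q)
  have hω : IsPrimitiveRoot ω q := isPrimitiveRoot_exp q hq.ne'
  have hprod : ∀ κ : ℕ, (2 : ℂ) ^ m * ∏ j, (1 + (-1) ^ (if y j then 1 else 0)
        * cos (2 * Real.pi * c j * κ / q))
      = ∏ j, (2 + (-1) ^ (if y j then 1 else 0) * ((ω ^ κ) ^ c j + ((ω ^ κ) ^ c j)⁻¹)) := by
    intro κ
    have hωκ : ω ^ κ = exp (2 * Real.pi * κ / q * I) := by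
      rw [← exp_nat_mul]
      ring_nf
    have harg : ∀ j, (2 * Real.pi * c j * κ / q : ℂ) = c j * (2 * Real.pi * κ / q) := fun j => by
      ring
    simp_rw [harg, hωκ, ← two_pow_card_mul_prod_one_add_mul_cos, Fintype.card_fin]
  apply ofReal_injective
  push_cast [ofReal_cos, apply_ite ofReal]
  calc (2 : ℂ) ^ m / q * ∑ κ ∈ range q, ∏ j, (1 + (-1) ^ (if y j then 1 else 0)
        * cos (2 * Real.pi * c j * κ / q))
      = ∑ s : Fin m → Bool, ∑ s' : Fin m → Bool,
          (-1) ^ (∑ j, (if y j then 1 else 0) * ((if s j then 1 else 0) + if s' j then 1 else 0))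
            * ((q : ℂ)⁻¹ * ∑ κ ∈ range q,
              (ω ^ κ) ^ ((∑ j, if s j then c j else 0) - ∑ j, if s' j then c j else 0)) := by
        rw [div_mul_eq_mul_div, mul_div_right_comm, div_eq_inv_mul, mul_assoc, mul_sum]
        simp_rw [hprod,
          prod_two_add_neg_one_pow_mul_zpow_add_inv _ _ (pow_ne_zero _ (hω.ne_zero hq.ne')), mul_sum]
        exact sum_comm.trans <| sum_congr rfl fun s _ => sum_comm.trans <|
          sum_congr rfl fun s' _ => sum_congr rfl fun κ _ => by ring
    _ = _ := by
        refine sum_congr rfl fun s _ => sum_congr rfl fun s' _ => ?_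
        simp only [hω.sum_range_pow_zpow, Int.modEq_iff_dvd, dvd_sub_comm]
        split_ifs <;> simp [hq.ne']
end

section
/- Let V be a symmetric m×m matrix over F₂, and let d, e be independent uniform random vectors in F₂^m. Then P(d·V·eᵀ = 0) = (1/2)·(1 + 2^{-rank(V)}). -/
/-!
Count the pairs `(d, e)` with `d ⬝ᵥ V *ᵥ e = 0` fibre by fibre over `e`. For fixed `e`, the
map `d ↦ d ⬝ᵥ V *ᵥ e` is a nonzero linear functional unless `V *ᵥ e = 0`, so it vanishes on
exactly a `1 / q` fraction of all `d` (on every `d` when `V *ᵥ e = 0`). By rank–nullity the kernel of `V` has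
`q ^ (m - rank V)` elements, so the number `N` of such pairs satisfies
`q * N = q ^ m * (q ^ m + (q - 1) * q ^ (m - rank V))`.
-/

open Finset Matrix Module

variable {K : Type*} [Field K] [Fintype K]

section
variable {M : Type*} [AddCommGroup M] [Module K M] [Fintype M]

theorem LinearMap.card_filter_eq_zero_mul_pow_finrank_range {N : Type*} [AddCommGroup N]
    [Module K N] [DecidableEq N] (f : M →ₗ[K] N) :
    #{x | f x = 0} * Fintype.card K ^ finrank K (LinearMap.range f) = Fintype.card M := by
  have hker : #{x | f x = 0} = Nat.card (LinearMap.ker f) := by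
    simp [Nat.card_eq_fintype_card, Fintype.card_subtype]
  rw [hker, ← Nat.card_eq_fintype_card, ← Nat.card_eq_fintype_card,
    natCard_eq_pow_finrank (K := K), natCard_eq_pow_finrank (K := K) (V := M), ← pow_add,
    add_comm, LinearMap.finrank_range_add_finrank_ker]

theorem Module.Dual.card_filter_eq_zero_mul_card [DecidableEq K] {f : Module.Dual K M}
    (hf : f ≠ 0) : #{x | f x = 0} * Fintype.card K = Fintype.card M := by
  have := f.card_filter_eq_zero_mul_pow_finrank_range
  rwa [Module.Dual.range_eq_top_of_ne_zero hf, finrank_top, finrank_self, pow_one] at this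

end

variable [DecidableEq K] {ι κ : Type*} [Fintype ι] [Fintype κ] [DecidableEq κ]

theorem Matrix.card_filter_mulVec_eq_zero_mul_pow_rank (V : Matrix ι κ K) :
    #{v | V *ᵥ v = 0} * Fintype.card K ^ V.rank = Fintype.card K ^ Fintype.card κ := by
  convert V.mulVecLin.card_filter_eq_zero_mul_pow_finrank_range using 4 <;> simp [Matrix.rank]

variable [DecidableEq ι]

theorem Matrix.card_filter_dotProduct_eq_zero_mul_card (w : ι → K) :
    #{v | v ⬝ᵥ w = 0} * Fintype.card K = Fintype.card K ^ Fintype.card ι +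
      if w = 0 then (Fintype.card K - 1) * Fintype.card K ^ Fintype.card ι else 0 := by
  split_ifs with hw
  · have hq := Fintype.card_pos (α := K)
    subst hw
    simp only [dotProduct_zero, filter_true, card_univ, Fintype.card_pi, prod_const]
    rw [mul_comm, Nat.sub_one_mul, Nat.add_sub_cancel' (Nat.le_mul_of_pos_left _ hq)]
  · have hf : dotProductEquiv K ι w ≠ 0 := by simpa using hw
    rw [add_zero]
    convert Module.Dual.card_filter_eq_zero_mul_card hf using 3 <;> simp [dotProduct_comm]

theorem Matrix.card_filter_dotProduct_mulVec_eq_zero_mul_card (V : Matrix ι κ K) :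
    #{p : (ι → K) × (κ → K) | p.1 ⬝ᵥ V *ᵥ p.2 = 0} * Fintype.card K
      = Fintype.card K ^ Fintype.card ι *
          (Fintype.card K ^ Fintype.card κ + (Fintype.card K - 1) * #{v | V *ᵥ v = 0}) := by
  have hfiber : #{p : (ι → K) × (κ → K) | p.1 ⬝ᵥ V *ᵥ p.2 = 0}
      = ∑ v : κ → K, #{u : ι → K | u ⬝ᵥ V *ᵥ v = 0} := by
    simp only [card_filter, Fintype.sum_prod_type_right]
  rw [hfiber, sum_mul]
  simp only [card_filter_dotProduct_eq_zero_mul_card, sum_add_distrib, ← sum_filter, sum_const,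
    card_univ, Fintype.card_pi, prod_const, smul_eq_mul]
  ring

theorem stmt19_general {m : ℕ} (V : Matrix (Fin m) (Fin m) (ZMod 2)) :
    ((Finset.univ.filter (fun de : (Fin m → ZMod 2) × (Fin m → ZMod 2) =>
        (∑ i, ∑ j, de.1 i * V i j * de.2 j) = 0)).card : ℝ) / (4:ℝ) ^ m
      = (1 / 2) * (1 + (2:ℝ) ^ (-(V.rank : ℤ))) := by
  have hform : ∀ d e : Fin m → ZMod 2, ∑ i, ∑ j, d i * V i j * e j = d ⬝ᵥ V *ᵥ e := by
    simp [dotProduct, mulVec, mul_sum, mul_assoc]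
  have hpairs := V.card_filter_dotProduct_mulVec_eq_zero_mul_card
  have hker := V.card_filter_mulVec_eq_zero_mul_pow_rank
  simp only [ZMod.card, Fintype.card_fin, Nat.add_one_sub_one, one_mul] at hpairs hker
  replace hpairs := congrArg (Nat.cast : ℕ → ℝ) hpairs
  replace hker := congrArg (Nat.cast : ℕ → ℝ) hker
  push_cast at hpairs hker
  simp only [hform]
  rw [_root_.zpow_neg, zpow_natCast, show (4:ℝ) = 2 * 2 by norm_num, mul_pow]
  field_simp
  linear_combination (2:ℝ) ^ V.rank * hpairs + (2:ℝ) ^ m * hker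

/-- For a symmetric matrix V over F₂ of rank r, the probability that two
independent uniform vectors d, e satisfy d·V·eᵀ = 0 is (1/2)(1 + 2^{-r}). -/
theorem stmt19 {m : ℕ} (V : Matrix (Fin m) (Fin m) (ZMod 2)) (hV : V.IsSymm) :
    ((Finset.univ.filter (fun de : (Fin m → ZMod 2) × (Fin m → ZMod 2) =>
        (∑ i, ∑ j, de.1 i * V i j * de.2 j) = 0)).card : ℝ) / (4:ℝ) ^ m
      = (1 / 2) * (1 + (2:ℝ) ^ (-(V.rank : ℤ))) :=
  stmt19_general V
end
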